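/- The full-conditional manifold is m-flat: if q0 and q1 are distributions belonging to E(θ) (that is, q0(x) = q0₋ᵢ(x)·θ(xᵢ,x) and q1(x) = q1₋ᵢ(x)·θ(xᵢ,x) for all x) and λ ∈ [0,1], then the convex combination qλ(x) = (1−λ)·q0(x) + λ·q1(x) is a distribution that also belongs to E(θ), i.e. qλ(x) = qλ₋ᵢ(x)·θ(xᵢ,x) for all x. -/

import Mathlib

open Finset

variable {ι : Type} [Fintype ι] [DecidableEq ι] [Nonempty ι]
  {α : ι → Type} [∀ i, Fintype (α i)] [∀ i, DecidableEq (α i)] [∀ i, Nonempty (α i)]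

/-- `p` is a probability distribution on the joint space `X = Π j, α j`. -/
def IsDist (p : (∀ j, α j) → ℝ) : Prop :=
  (∀ x, 0 ≤ p x) ∧ ∑ x, p x = 1

/-- The `i`-marginal `p₋ᵢ(x) = Σ_{a ∈ α i} p(x[i↦a])`. -/
noncomputable def marg (p : (∀ j, α j) → ℝ) (i : ι) (x : ∀ j, α j) : ℝ :=
  ∑ a, p (Function.update x i a)

/-- `θ` is a conditional probability table (CPT) at node `i`:
positive, normalized, and depending only on the coordinates other than `i`. -/
def IsCPT (i : ι) (θ : α i → (∀ j, α j) → ℝ) : Prop :=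
  (∀ a x, 0 < θ a x) ∧ (∀ x, ∑ a, θ a x = 1) ∧
  (∀ a x (b : α i), θ a (Function.update x i b) = θ a x)

/-- `q` belongs to the full-conditional manifold `E(θ)`:
`q(x) = q₋ᵢ(x)·θ(xᵢ,x)` for all `x`. -/
noncomputable def memE (i : ι) (θ : α i → (∀ j, α j) → ℝ) (q : (∀ j, α j) → ℝ) : Prop :=
  ∀ x, q x = marg q i x * θ (x i) x

omit [Nonempty ι] [∀ i, DecidableEq (α i)] [∀ i, Nonempty (α i)] in
theorem IsDist.convex_comb {p q : (∀ j, α j) → ℝ} (hp : IsDist p) (hq : IsDist q)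
    {l : ℝ} (hl0 : 0 ≤ l) (hl1 : l ≤ 1) :
    IsDist (fun x => (1 - l) * p x + l * q x) := by
  refine ⟨fun x => ?_, ?_⟩
  · have := hp.1 x
    have := hq.1 x
    positivity
  · simp only [sum_add_distrib, ← mul_sum, hp.2, hq.2]
    ring

omit [Fintype ι] [Nonempty ι] [∀ i, DecidableEq (α i)] [∀ i, Nonempty (α i)] in
theorem marg_linear_comb (p q : (∀ j, α j) → ℝ) (a b : ℝ) (i : ι) (x : ∀ j, α j) :
    marg (fun y => a * p y + b * q y) i x = a * marg p i x + b * marg q i x := by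
  simp only [marg, sum_add_distrib, mul_sum]

omit [Fintype ι] [Nonempty ι] [∀ i, DecidableEq (α i)] [∀ i, Nonempty (α i)] in
theorem memE.linear_comb {i : ι} {θ : α i → (∀ j, α j) → ℝ} {p q : (∀ j, α j) → ℝ}
    (hp : memE i θ p) (hq : memE i θ q) (a b : ℝ) :
    memE i θ (fun x => a * p x + b * q x) := by
  intro x
  dsimp only
  rw [marg_linear_comb]
  conv_lhs => rw [hp x, hq x]
  ring

theorem fullConditionalManifold_mFlat_general (i : ι) (θ : α i → (∀ j, α j) → ℝ)
    (q0 q1 : (∀ j, α j) → ℝ)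
    (h0 : IsDist q0) (h1 : IsDist q1)
    (hE0 : memE i θ q0) (hE1 : memE i θ q1)
    (l : ℝ) (hl0 : 0 ≤ l) (hl1 : l ≤ 1) :
    IsDist (fun x => (1 - l) * q0 x + l * q1 x) ∧
    memE i θ (fun x => (1 - l) * q0 x + l * q1 x) :=
  ⟨h0.convex_comb h1 hl0 hl1, hE0.linear_comb hE1 (1 - l) l⟩

/-- Theorem 1, m-flatness: the full-conditional manifold is m-flat. -/
theorem fullConditionalManifold_mFlat (i : ι) (θ : α i → (∀ j, α j) → ℝ)
    (hθ : IsCPT i θ) (q0 q1 : (∀ j, α j) → ℝ)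
    (h0 : IsDist q0) (h1 : IsDist q1)
    (hE0 : memE i θ q0) (hE1 : memE i θ q1)
    (l : ℝ) (hl0 : 0 ≤ l) (hl1 : l ≤ 1) :
    IsDist (fun x => (1 - l) * q0 x + l * q1 x) ∧
    memE i θ (fun x => (1 - l) * q0 x + l * q1 x) :=
  fullConditionalManifold_mFlat_general i θ q0 q1 h0 h1 hE0 hE1 l hl0 hl1
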